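/- Let H be a complex Hilbert space and let A, P, Q be bounded linear operators on H with P and Q positive, satisfying A Q A* = A* P A. If Q is invertible, then A is posinormal; that is, there exists a positive bounded operator P' on H with A A* = A* P' A. -/

import Mathlib

/-!
Since `Q` is positive and invertible, it is bounded below: `c ‖g‖² ≤ re ⟪Q g, g⟫` for some
`c > 0`. Taking `g = A* x` in `A Q A* = A* P A` gives `c ‖A* x‖² ≤ re ⟪P A x, A x⟫ ≤ ‖P‖ ‖A x‖²`,
so `‖A* x‖ ≤ M ‖A x‖`. By Douglas' factorization `A* = C A` for a bounded `C`, hence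
`A = A* C*` and `A A* = A* (C* C) A`.
-/

open scoped ComplexOrder
open ContinuousLinearMap

theorem exists_comp_eq_of_norm_apply_le {𝕜 E F G : Type*} [RCLike 𝕜]
    [NormedAddCommGroup E] [NormedSpace 𝕜 E] [NormedAddCommGroup F] [NormedSpace 𝕜 F]
    [CompleteSpace F] [NormedAddCommGroup G] [InnerProductSpace 𝕜 G] [CompleteSpace G]
    (T : E →L[𝕜] F) (D : E →L[𝕜] G) (M : ℝ) (h : ∀ x, ‖T x‖ ≤ M * ‖D x‖) :
    ∃ C : G →L[𝕜] F, C ∘L D = T := by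
  set K := (LinearMap.range (D : E →ₗ[𝕜] G)).topologicalClosure
  let e : E →ₗ[𝕜] K := (D : E →ₗ[𝕜] G).codRestrict K
    fun x => Submodule.le_topologicalClosure _ (LinearMap.mem_range_self _ x)
  have he : DenseRange e := by
    rw [DenseRange, Subtype.dense_iff, ← Set.range_comp]
    exact (LinearMap.range (D : E →ₗ[𝕜] G)).topologicalClosure_coe.le
  refine ⟨(T : E →ₗ[𝕜] F).extendOfNorm e ∘L K.orthogonalProjectionOnto, ?_⟩
  ext x
  have hproj : K.orthogonalProjectionOnto (D x) = e x :=
    K.orthogonalProjectionOnto_mem_subspace_eq_self (e x)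
  simp only [comp_apply, hproj]
  exact LinearMap.extendOfNorm_eq he ⟨M, h⟩ x

section Posinormal

variable {𝕜 H : Type*} [RCLike 𝕜] [NormedAddCommGroup H] [InnerProductSpace 𝕜 H]
  [CompleteSpace H]

def IsPosinormal (A : H →L[𝕜] H) : Prop :=
  ∃ P : H →L[𝕜] H, P.IsPositive ∧ A ∘L adjoint A = adjoint A ∘L P ∘L A

theorem isPosinormal_of_norm_adjoint_apply_le (A : H →L[𝕜] H) {M : ℝ}
    (h : ∀ x, ‖adjoint A x‖ ≤ M * ‖A x‖) : IsPosinormal A := by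
  obtain ⟨C, hC⟩ := exists_comp_eq_of_norm_apply_le (adjoint A) A M h
  refine ⟨adjoint C ∘L C, isPositive_adjoint_comp_self C, ?_⟩
  have hA : A = adjoint A ∘L adjoint C := by rw [← adjoint_comp, hC, adjoint_adjoint]
  calc A ∘L adjoint A = (adjoint A ∘L adjoint C) ∘L (C ∘L A) := by rw [hC, ← hA]
    _ = adjoint A ∘L (adjoint C ∘L C) ∘L A := rfl

end Posinormal

section Complex

variable {H : Type*} [NormedAddCommGroup H] [InnerProductSpace ℂ H]

theorem isPositive_of_forall_inner_nonneg {Q : H →L[ℂ] H} (hQ : ∀ f, 0 ≤ inner ℂ (Q f) f) :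
    Q.IsPositive := by
  rw [isPositive_iff_complex]
  intro f
  obtain ⟨hre, him⟩ := Complex.nonneg_iff.mp (hQ f)
  exact ⟨Complex.ext (by simp) (by simp [him]), hre⟩

variable [CompleteSpace H]

theorem IsStrictlyPositive.exists_pos_mul_norm_sq_le_re_inner {Q : H →L[ℂ] H}
    (hQ : IsStrictlyPositive Q) : ∃ c > 0, ∀ g, c * ‖g‖ ^ 2 ≤ RCLike.re (inner ℂ (Q g) g) := by
  cases subsingleton_or_nontrivial H
  · exact ⟨1, one_pos, fun g => by simp [Subsingleton.elim g 0]⟩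
  obtain ⟨c, hc, hcQ⟩ := (CFC.exists_pos_algebraMap_le_iff hQ.isSelfAdjoint).2
    fun x hx => hQ.spectrum_pos hx
  refine ⟨c, hc, fun g => ?_⟩
  have := ((le_def _ _).mp hcQ).re_inner_nonneg_left g
  simpa [inner_sub_left, inner_self_eq_norm_sq_to_K, ← Complex.ofReal_pow] using this

theorem exists_norm_adjoint_apply_le_mul_norm_apply {A P Q : H →L[ℂ] H}
    (hQ : IsStrictlyPositive Q) (hAQA : A ∘L Q ∘L adjoint A = adjoint A ∘L P ∘L A) :
    ∃ M, ∀ x, ‖adjoint A x‖ ≤ M * ‖A x‖ := by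
  obtain ⟨c, hc, hcQ⟩ := hQ.exists_pos_mul_norm_sq_le_re_inner
  refine ⟨√(‖P‖ / c), fun x => ?_⟩
  have hsq : c * ‖adjoint A x‖ ^ 2 ≤ ‖P‖ * ‖A x‖ ^ 2 :=
    calc c * ‖adjoint A x‖ ^ 2 ≤ RCLike.re (inner ℂ (Q (adjoint A x)) (adjoint A x)) := hcQ _
      _ = RCLike.re (inner ℂ (adjoint A (P (A x))) x) := by
        rw [adjoint_inner_right]
        exact congrArg (fun y => RCLike.re (inner ℂ y x)) (DFunLike.congr_fun hAQA x)
      _ = RCLike.re (inner ℂ (P (A x)) (A x)) := by rw [adjoint_inner_left]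
      _ ≤ ‖P (A x)‖ * ‖A x‖ := (RCLike.re_le_norm _).trans (norm_inner_le_norm _ _)
      _ ≤ ‖P‖ * ‖A x‖ ^ 2 := by
        rw [sq, ← mul_assoc]
        gcongr
        exact P.le_opNorm _
  rw [← pow_le_pow_iff_left₀ (norm_nonneg _) (by positivity) two_ne_zero, mul_pow,
    Real.sq_sqrt (by positivity), div_mul_eq_mul_div, le_div_iff₀ hc]
  linarith

end Complex

theorem posinormal_of_invertible_interrupter_general
    {H : Type*} [NormedAddCommGroup H] [InnerProductSpace ℂ H] [CompleteSpace H]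
    (A P Q : H →L[ℂ] H)
    (hQ : ∀ f : H, 0 ≤ (inner ℂ (Q f) f : ℂ))
    (hAQA : A ∘L Q ∘L adjoint A = adjoint A ∘L P ∘L A)
    (hQinv : IsUnit Q) :
    ∃ P' : H →L[ℂ] H, (∀ f : H, 0 ≤ (inner ℂ (P' f) f : ℂ)) ∧
      A ∘L adjoint A = adjoint A ∘L P' ∘L A := by
  have hQpos : IsStrictlyPositive Q :=
    hQinv.isStrictlyPositive ((nonneg_iff_isPositive Q).mpr (isPositive_of_forall_inner_nonneg hQ))
  obtain ⟨M, hM⟩ := exists_norm_adjoint_apply_le_mul_norm_apply hQpos hAQA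
  obtain ⟨P', hP', hAA⟩ := isPosinormal_of_norm_adjoint_apply_le A hM
  exact ⟨P', hP'.inner_nonneg_left, hAA⟩

/-- If `A Q A* = A* P A` with `P, Q` positive and `Q` invertible,
then `A` is posinormal: there is a positive `P'` with `A A* = A* P' A`. -/
theorem posinormal_of_invertible_interrupter
    {H : Type*} [NormedAddCommGroup H] [InnerProductSpace ℂ H] [CompleteSpace H]
    (A P Q : H →L[ℂ] H)
    (hP : ∀ f : H, 0 ≤ (inner ℂ (P f) f : ℂ))
    (hQ : ∀ f : H, 0 ≤ (inner ℂ (Q f) f : ℂ))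
    (hAQA : A ∘L Q ∘L adjoint A = adjoint A ∘L P ∘L A)
    (hQinv : IsUnit Q) :
    ∃ P' : H →L[ℂ] H, (∀ f : H, 0 ≤ (inner ℂ (P' f) f : ℂ)) ∧
      A ∘L adjoint A = adjoint A ∘L P' ∘L A :=
  posinormal_of_invertible_interrupter_general A P Q hQ hAQA hQinv
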